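/- Let C be a Λ-MT code with block lengths (m_1,…,m_ℓ), where Λ = (λ_1,…,λ_ℓ), and set Γ = (λ_ℓ^{−1}, λ_{ℓ−1}^{−1},…,λ_1^{−1}). Then the reversed code R of C (obtained by reversing the coordinates of each codeword) is a Γ-MT code with block lengths (m_ℓ, m_{ℓ−1},…,m_1), and B^T·J_ℓ is a GPM of R, where H is a GPM of the Euclidean dual C^⊥, B is the polynomial matrix satisfying B·H = diag(x^{m_1}−λ_1^{−1},…,x^{m_ℓ}−λ_ℓ^{−1}), and J_ℓ is the ℓ×ℓ backward identity matrix. -/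

import Mathlib

open Polynomial Matrix

/-- constacyclic shift with constant `lam` on one block of length `m`:
`(a₀, …, a_{m-1}) ↦ (lam * a_{m-1}, a₀, …, a_{m-2})`. -/
def blockShift {F : Type*} [Field F] (lam : F) {m : ℕ} (a : Fin m → F) : Fin m → F :=
  fun j => if j.val = 0 then lam * a ⟨m - 1, by have := j.isLt; omega⟩
           else a ⟨j.val - 1, by have := j.isLt; omega⟩

/-- `CC ⊆ ⊕ᵢ F^{m i}` is a Λ-multi-twisted code: it is invariant under the blockwise
constacyclic shift `T_Λ`. -/
def IsMT {F : Type*} [Field F] {ℓ : ℕ} (lam : Fin ℓ → F) {m : Fin ℓ → ℕ}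
    (CC : Submodule F (∀ i, Fin (m i) → F)) : Prop :=
  ∀ v ∈ CC, (fun i => blockShift (lam i) (v i)) ∈ CC

/-- from a polynomial vector in `(F[x])^ℓ` to a blocked vector: reduce component `i`
modulo `x^{m i} - λᵢ` and take the coefficients. -/
noncomputable def toCode {F : Type*} [Field F] {ℓ : ℕ} (lam : Fin ℓ → F) (m : Fin ℓ → ℕ)
    (q : Fin ℓ → Polynomial F) : ∀ i, Fin (m i) → F :=
  fun i j => ((q i) %ₘ (X ^ (m i) - Polynomial.C (lam i))).coeff j

/-- `G` is a generator polynomial matrix (GPM) of the Λ-MT code `CC`: its rows form a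
minimal generating set (equivalently, since the corresponding submodule of `(F[x])^ℓ` has
rank `ℓ`, a linearly independent generating set) of the `F[x]`-submodule of `(F[x])^ℓ`
corresponding to `CC`, namely `{q | toCode lam m q ∈ CC}`. -/
def IsGPM {F : Type*} [Field F] {ℓ : ℕ} (lam : Fin ℓ → F) (m : Fin ℓ → ℕ)
    (CC : Submodule F (∀ i, Fin (m i) → F))
    (G : Matrix (Fin ℓ) (Fin ℓ) (Polynomial F)) : Prop :=
  LinearIndependent (Polynomial F) (fun i => G i) ∧
  (Submodule.span (Polynomial F) (Set.range (fun i => G i)) :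
      Set (Fin ℓ → Polynomial F)) = {q | toCode lam m q ∈ CC}

/-- Euclidean dual of a blocked code. -/
def dualCodeMT {F : Type*} [Field F] {ℓ : ℕ} {m : Fin ℓ → ℕ}
    (CC : Submodule F (∀ i, Fin (m i) → F)) : Submodule F (∀ i, Fin (m i) → F) where
  carrier := {v | ∀ c ∈ CC, ∑ i, ∑ j, c i j * v i j = 0}
  zero_mem' := by intro c hc; simp
  add_mem' := by
    intro a b ha hb c hc
    simp only [Set.mem_setOf_eq] at *
    simp only [Pi.add_apply, mul_add, Finset.sum_add_distrib, ha c hc, hb c hc, add_zero]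
  smul_mem' := by
    intro r v hv c hc
    simp only [Set.mem_setOf_eq] at *
    have h1 : ∀ i, ∑ j, c i j * (r • v) i j = r * ∑ j, c i j * v i j := by
      intro i
      rw [Finset.mul_sum]
      exact Finset.sum_congr rfl (fun j _ => by simp only [Pi.smul_apply, smul_eq_mul]; ring)
    simp only [h1, ← Finset.mul_sum, hv c hc, mul_zero]

/-- reversal of the coordinates of a blocked vector: block `i` of the result is the
reversal of block `ℓ-1-i` of the input. -/
def revMT {F : Type*} [Field F] {ℓ : ℕ} {m : Fin ℓ → ℕ} :
    (∀ i : Fin ℓ, Fin (m i) → F) →ₗ[F] (∀ i : Fin ℓ, Fin (m i.rev) → F) where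
  toFun v := fun i j => v i.rev j.rev
  map_add' _ _ := rfl
  map_smul' _ _ := rfl

/-!
Write `δᵢ = X ^ mᵢ - λᵢ⁻¹`, `P = ∏ δᵢ` and `P̂ᵢ = P / δᵢ`. Reading the blocks of a codeword as
residues modulo the `δᵢ`, the dot product of `u` with the blockwise reversal of `r` is
`∑ᵢ coeff_{mᵢ-1} (uᵢ rᵢ mod δᵢ) = coeff_{deg P - 1} (∑ᵢ uᵢ rᵢ P̂ᵢ mod P)`. Since
`C = (C^⊥)^⊥` and `C^⊥` corresponds to the row span of `H`, the blockwise reversal of `r` lies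
in `C` iff `P` divides every entry of `H · diag(P̂) · r`. From `B · H = diag(δ)` one gets
`H · diag(P̂) · B = P · 1`, so this happens exactly when `r` lies in the column span of `B`;
reversing the order of the blocks turns the columns of `B` into the rows of `Bᵀ J_ℓ`.
The twist property of the reversed code holds because the `Λ`-shift is injective, hence
bijective on `C`, and reversal conjugates its inverse into the `Γ`-shift.
-/

section Cofactor

variable {ι M : Type*} [Fintype ι] [DecidableEq ι] [CommMonoid M]

def cofactor (δ : ι → M) (i : ι) : M := ∏ j ∈ Finset.univ.erase i, δ j

theorem mul_cofactor (δ : ι → M) (i : ι) : δ i * cofactor δ i = ∏ j, δ j :=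
  Finset.mul_prod_erase _ _ (Finset.mem_univ i)

end Cofactor

namespace Polynomial

variable {R : Type*} [CommRing R]

theorem coeff_pred_modByMonic_X_pow_sub_C [Nontrivial R] {M : ℕ} (hM : 0 < M) (c : R)
    {p : R[X]} (hp : p.natDegree ≤ 2 * M - 2) :
    (p %ₘ (X ^ M - C c)).coeff (M - 1) = p.coeff (M - 1) := by
  have hδ : (X ^ M - C c : R[X]).Monic := monic_X_pow_sub_C c hM.ne'
  by_cases hlt : p.natDegree < M
  · rw [(modByMonic_eq_self_iff hδ).2 (degree_lt_degree (by rwa [natDegree_X_pow_sub_C]))]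
  -- the quotient has degree `≤ M - 2`, so `C c` times it has no `X ^ (M - 1)` term
  have hq : (p /ₘ (X ^ M - C c)).coeff (M - 1) = 0 := by
    refine coeff_eq_zero_of_natDegree_lt ?_
    rw [natDegree_divByMonic p hδ, natDegree_X_pow_sub_C]
    omega
  conv_rhs => rw [← modByMonic_add_div p (X ^ M - C c)]
  rw [coeff_add, sub_mul, coeff_sub, coeff_X_pow_mul', if_neg (by omega), coeff_C_mul, hq]
  ring

theorem coeff_pred_mul_modByMonic_X_pow_sub_C [Nontrivial R] {M : ℕ} (hM : 0 < M) (c : R)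
    (f g : R[X]) :
    ((f * g) %ₘ (X ^ M - C c)).coeff (M - 1) =
      ∑ j : Fin M, (f %ₘ (X ^ M - C c)).coeff j * (g %ₘ (X ^ M - C c)).coeff j.rev := by
  have hδ : (X ^ M - C c : R[X]).Monic := monic_X_pow_sub_C c hM.ne'
  have hdeg (h : R[X]) : (h %ₘ (X ^ M - C c)).natDegree ≤ M - 1 := by
    have := natDegree_modByMonic_lt h hδ fun h1 => by
      simpa [hM.ne'] using congrArg natDegree h1
    rw [natDegree_X_pow_sub_C] at this
    omega
  rw [mul_modByMonic, coeff_pred_modByMonic_X_pow_sub_C hM c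
      (natDegree_mul_le.trans (by have := hdeg f; have := hdeg g; omega)),
    coeff_mul, Finset.Nat.sum_antidiagonal_eq_sum_range_succ_mk,
    show (M - 1).succ = M by omega, ← Fin.sum_univ_eq_sum_range]
  refine Finset.sum_congr rfl fun j _ => ?_
  rw [Fin.val_rev]
  congr 2
  omega

theorem coeff_mul_modByMonic_mul {δ Q : R[X]} (hδ : δ.Monic) (hQ : Q.Monic)
    (hδ0 : 0 < δ.natDegree) (f : R[X]) :
    ((f * Q) %ₘ (δ * Q)).coeff (δ.natDegree - 1 + Q.natDegree) =
      (f %ₘ δ).coeff (δ.natDegree - 1) := by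
  have hδ1 : δ ≠ 1 := by rintro rfl; simp at hδ0
  have hr : (f %ₘ δ).natDegree ≤ δ.natDegree - 1 :=
    Nat.le_pred_of_lt (natDegree_modByMonic_lt f hδ hδ1)
  have hmod : (f * Q) %ₘ (δ * Q) = f %ₘ δ * Q := by
    refine (div_modByMonic_unique (f /ₘ δ) _ (hδ.mul hQ) ⟨?_, ?_⟩).2
    · linear_combination Q * modByMonic_add_div f δ
    · refine degree_lt_degree (natDegree_mul_le.trans_lt ?_)
      rw [hδ.natDegree_mul hQ]
      omega
  rw [hmod, coeff_mul_add_eq_of_natDegree_le hr le_rfl, hQ.coeff_natDegree, mul_one]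

theorem dvd_of_forall_coeff_mul_modByMonic_eq_zero [Nontrivial R] {P S : R[X]} (hP : P.Monic)
    (h : ∀ f : R[X], ((f * S) %ₘ P).coeff (P.natDegree - 1) = 0) : P ∣ S := by
  rw [← modByMonic_eq_zero_iff_dvd hP]
  by_contra hr
  set r := S %ₘ P with hr_def
  have hrP : r.natDegree < P.natDegree :=
    natDegree_modByMonic_lt S hP fun h1 => hr (by simp [r, h1])
  -- multiplying by `X ^ k` moves the leading coefficient of `r` to the coefficient tested by `h`
  set k := P.natDegree - 1 - r.natDegree
  have hmod : (X ^ k * S) %ₘ P = X ^ k * r := by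
    rw [modByMonic_eq_of_dvd_sub hP (p₂ := X ^ k * r) ⟨X ^ k * (S /ₘ P), ?_⟩,
      (modByMonic_eq_self_iff hP).2 (degree_lt_degree ?_)]
    · refine natDegree_mul_le.trans_lt ?_
      rw [natDegree_X_pow]
      omega
    · rw [hr_def, modByMonic_eq_sub_mul_div S P]
      ring
  have hk := h (X ^ k)
  rw [hmod, coeff_X_pow_mul', if_pos (by omega),
    show P.natDegree - 1 - k = r.natDegree by omega] at hk
  exact hr (leadingCoeff_eq_zero.1 hk)

theorem sum_coeff_modByMonic_eq_coeff_dotProduct_cofactor {ι : Type*}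
    [Fintype ι] [DecidableEq ι] {δ : ι → R[X]} (hδ : ∀ i, (δ i).Monic)
    (hδ0 : ∀ i, 0 < (δ i).natDegree) (g : ι → R[X]) :
    ∑ i, (g i %ₘ δ i).coeff ((δ i).natDegree - 1) =
      ((g ⬝ᵥ cofactor δ) %ₘ ∏ i, δ i).coeff ((∏ i, δ i).natDegree - 1) := by
  simp only [dotProduct, ← modByMonicHom_apply, map_sum, finsetSum_coeff]
  refine Finset.sum_congr rfl fun i _ => ?_
  have hcof : (cofactor δ i).Monic := monic_prod_of_monic _ _ fun j _ => hδ j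
  rw [modByMonicHom_apply, ← mul_cofactor δ i, (hδ i).natDegree_mul hcof,
    ← coeff_mul_modByMonic_mul (hδ i) hcof (hδ0 i)]
  congr 1
  have := hδ0 i
  omega

end Polynomial

namespace Matrix

theorem dvd_mulVec_iff_forall_mem_span {R ι κ : Type*} [CommRing R] [Nontrivial R]
    [Fintype ι] [Fintype κ] {P : R[X]} (hP : P.Monic) (H : Matrix κ ι R[X]) (w : ι → R[X]) :
    (∀ k, P ∣ (H *ᵥ w) k) ↔ ∀ u ∈ Submodule.span R[X] (Set.range fun k => H k),
      ((u ⬝ᵥ w) %ₘ P).coeff (P.natDegree - 1) = 0 := by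
  constructor
  · intro h u hu
    obtain ⟨c, rfl⟩ := (Submodule.mem_span_range_iff_exists_fun R[X]).1 hu
    have hdvd : P ∣ c ⬝ᵥ (H *ᵥ w) := Finset.dvd_sum fun k _ => dvd_mul_of_dvd_right (h k) _
    rw [← vecMul_eq_sum, ← dotProduct_mulVec, (modByMonic_eq_zero_iff_dvd hP).2 hdvd,
      coeff_zero]
  · intro h k
    refine dvd_of_forall_coeff_mul_modByMonic_eq_zero hP fun f => ?_
    have := h (f • H k) (Submodule.smul_mem _ _ (Submodule.subset_span ⟨k, rfl⟩))
    rw [smul_dotProduct, smul_eq_mul] at this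
    exact this

variable {n R : Type*} [Fintype n] [DecidableEq n] [CommRing R] [IsDomain R]

theorem mul_eq_smul_one_comm {A B : Matrix n n R} {c : R} (hc : c ≠ 0) (h : A * B = c • 1) :
    B * A = c • 1 := by
  have hB : B.det ≠ 0 := fun h0 =>
    pow_ne_zero _ hc (by simpa [det_mul, h0, det_smul] using (congrArg det h).symm)
  have hzero : B.det • (B * A - c • 1) = 0 := by
    calc B.det • (B * A - c • 1) = (B * A - c • 1) * (B * B.adjugate) := by
          rw [mul_adjugate, Matrix.mul_smul, Matrix.mul_one]
      _ = (B * (A * B) - c • B) * B.adjugate := by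
          simp only [Matrix.sub_mul, Matrix.mul_assoc, Matrix.smul_mul, Matrix.one_mul]
      _ = 0 := by rw [h, Matrix.mul_smul, Matrix.mul_one, sub_self, Matrix.zero_mul]
  exact sub_eq_zero.1 ((smul_eq_zero.1 hzero).resolve_left hB)

theorem mem_span_range_col_iff {δ : n → R} (hδ : ∏ i, δ i ≠ 0) {B H : Matrix n n R}
    (hBH : B * H = diagonal δ) (r : n → R) :
    r ∈ Submodule.span R (Set.range B.col) ↔
      ∀ k, (∏ i, δ i) ∣ (H *ᵥ (diagonal (cofactor δ) *ᵥ r)) k := by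
  have hD : diagonal δ * diagonal (cofactor δ) = (∏ i, δ i) • (1 : Matrix n n R) := by
    simp only [diagonal_mul_diagonal, mul_cofactor, smul_one_eq_diagonal]
  have hcomm : diagonal (cofactor δ) * diagonal δ = diagonal δ * diagonal (cofactor δ) := by
    simp only [diagonal_mul_diagonal, mul_comm]
  have hHDB : H * (diagonal (cofactor δ) * B) = (∏ i, δ i) • 1 :=
    mul_eq_smul_one_comm hδ (by rw [Matrix.mul_assoc, hBH, hcomm, hD])
  rw [← range_mulVecLin]
  constructor
  · rintro ⟨c, rfl⟩ k
    refine ⟨c k, ?_⟩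
    rw [mulVecLin_apply, mulVec_mulVec, mulVec_mulVec, Matrix.mul_assoc, hHDB, smul_mulVec,
      one_mulVec]
    rfl
  · intro h
    choose c hc using h
    refine ⟨c, smul_right_injective _ hδ ?_⟩
    calc (∏ i, δ i) • (B *ᵥ c) = B *ᵥ (H *ᵥ (diagonal (cofactor δ) *ᵥ r)) := by
          rw [← mulVec_smul]
          exact congrArg _ (funext fun k => (hc k).symm)
      _ = (∏ i, δ i) • r := by
          rw [mulVec_mulVec, mulVec_mulVec, hBH, hD, smul_mulVec, one_mulVec]

end Matrix

section Shift

variable {F : Type*} [Field F]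

theorem blockShift_inv_rev {M : ℕ} {lam : F} (hlam : lam ≠ 0) (b : Fin M → F) :
    blockShift lam⁻¹ (fun j => blockShift lam b j.rev) = fun j => b j.rev := by
  funext j
  have hj := j.isLt
  simp only [blockShift, Fin.val_rev]
  split_ifs
  · rw [← mul_assoc, inv_mul_cancel₀ hlam, one_mul]
    congr 1
    ext
    simp only [Fin.val_rev]
    omega
  all_goals first
    | omega
    | congr 1; ext; simp only [Fin.val_rev]; omega

theorem blockShift_injective {M : ℕ} {lam : F} (hlam : lam ≠ 0) :
    Function.Injective (blockShift (m := M) lam) := by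
  intro a b h
  have hrev := blockShift_inv_rev hlam a
  rw [h, blockShift_inv_rev hlam b] at hrev
  funext j
  simpa using (congrFun hrev j.rev).symm

variable {ℓ : ℕ} {m : Fin ℓ → ℕ}

def twistShift (lam : Fin ℓ → F) :
    (∀ i, Fin (m i) → F) →ₗ[F] ∀ i, Fin (m i) → F where
  toFun v i := blockShift (lam i) (v i)
  map_add' u v := by
    funext i j
    simp only [blockShift, Pi.add_apply]
    split_ifs <;> ring
  map_smul' c v := by
    funext i j
    simp only [blockShift, Pi.smul_apply, smul_eq_mul, RingHom.id_apply]
    split_ifs <;> ring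

theorem twistShift_injective {lam : Fin ℓ → F} (hlam : ∀ i, lam i ≠ 0) :
    Function.Injective (twistShift (m := m) lam) :=
  fun _ _ h => funext fun i => blockShift_injective (hlam i) (congrFun h i)

theorem IsMT.exists_twistShift_eq {lam : Fin ℓ → F} (hlam : ∀ i, lam i ≠ 0)
    {CC : Submodule F (∀ i, Fin (m i) → F)} (hC : IsMT lam CC) {v : ∀ i, Fin (m i) → F}
    (hv : v ∈ CC) : ∃ w ∈ CC, twistShift lam w = v := by
  have hsurj : Function.Surjective ((twistShift lam).restrict hC) :=
    LinearMap.injective_iff_surjective.mp fun _ _ h =>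
      Subtype.ext (twistShift_injective hlam (congrArg Subtype.val h))
  obtain ⟨⟨w, hw⟩, hwv⟩ := hsurj ⟨v, hv⟩
  exact ⟨w, hw, congrArg Subtype.val hwv⟩

theorem IsMT.map_revMT {lam : Fin ℓ → F} (hlam : ∀ i, lam i ≠ 0)
    {CC : Submodule F (∀ i, Fin (m i) → F)} (hC : IsMT lam CC) :
    IsMT (fun i => (lam i.rev)⁻¹) (CC.map revMT) := by
  rintro _ ⟨c, hc, rfl⟩
  obtain ⟨w, hw, rfl⟩ := IsMT.exists_twistShift_eq hlam hC hc
  exact ⟨w, hw, funext fun i => (blockShift_inv_rev (hlam i.rev) (w i.rev)).symm⟩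

end Shift

section Dual

variable {F : Type*} [Field F] {ℓ : ℕ} {m : Fin ℓ → ℕ}

variable (F m) in
def dotForm : LinearMap.BilinForm F (∀ i, Fin (m i) → F) :=
  LinearMap.mk₂ F (fun c v => ∑ i, ∑ j, c i j * v i j)
    (fun a b c => by simp [add_mul, Finset.sum_add_distrib])
    (fun r a b => by simp [Finset.mul_sum, mul_assoc])
    (fun a b c => by simp [mul_add, Finset.sum_add_distrib])
    (fun r a b => by simp [Finset.mul_sum, mul_left_comm])

theorem dotForm_isSymm : (dotForm F m).IsSymm :=
  LinearMap.BilinForm.isSymm_def.2 fun c v => by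
    simp only [dotForm, LinearMap.mk₂_apply, mul_comm]

theorem dotForm_nondegenerate : (dotForm F m).Nondegenerate := by
  classical
  refine (LinearMap.IsRefl.nondegenerate_iff_separatingLeft (B := dotForm F m)
    dotForm_isSymm.isRefl).2 fun x hx => ?_
  funext i j
  have h := hx (Pi.single i (Pi.single j 1))
  simp only [dotForm, LinearMap.mk₂_apply] at h
  rw [Finset.sum_eq_single i (fun i' _ hi' => by simp [Pi.single_eq_of_ne hi']) (by simp),
    Finset.sum_eq_single j (fun j' _ hj' => by simp [Pi.single_eq_of_ne hj']) (by simp)] at h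
  simpa using h

theorem dualCodeMT_dualCodeMT (CC : Submodule F (∀ i, Fin (m i) → F)) :
    dualCodeMT (dualCodeMT CC) = CC :=
  LinearMap.BilinForm.orthogonal_orthogonal (B := dotForm F m) dotForm_nondegenerate
    dotForm_isSymm.isRefl CC

end Dual

section Code

variable {F : Type*} [Field F] {ℓ : ℕ} {m : Fin ℓ → ℕ}

theorem toCode_surjective (hm : ∀ i, 0 < m i) (μ : Fin ℓ → F) :
    Function.Surjective (toCode μ m) := by
  intro v
  refine ⟨fun i => ((degreeLTEquiv F (m i)).symm (v i) : F[X]),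
    funext fun i => funext fun j => ?_⟩
  set p := (degreeLTEquiv F (m i)).symm (v i)
  have hmod : (p : F[X]) %ₘ (X ^ m i - C (μ i)) = p :=
    (modByMonic_eq_self_iff (monic_X_pow_sub_C _ (hm i).ne')).2
      (by rw [degree_X_pow_sub_C (hm i)]; exact mem_degreeLT.1 p.2)
  change ((p : F[X]) %ₘ (X ^ m i - C (μ i))).coeff j = v i j
  rw [hmod]
  exact congrFun ((degreeLTEquiv F (m i)).apply_symm_apply (v i)) j

theorem sum_toCode_mul_toCode_rev (hm : ∀ i, 0 < m i) (μ : Fin ℓ → F)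
    (u r : Fin ℓ → F[X]) :
    ∑ i, ∑ j, toCode μ m u i j * toCode μ m r i j.rev =
      ∑ i, ((u i * r i) %ₘ (X ^ m i - C (μ i))).coeff (m i - 1) :=
  Finset.sum_congr rfl fun i _ =>
    (coeff_pred_mul_modByMonic_X_pow_sub_C (hm i) (μ i) (u i) (r i)).symm

theorem revMT_injective :
    Function.Injective (revMT : (∀ i : Fin ℓ, Fin (m i) → F) →ₗ[F] _) := by
  intro c c' h
  funext i
  have hi : ∀ j : Fin (m i.rev.rev), c i.rev.rev j.rev = c' i.rev.rev j.rev :=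
    fun j => congrFun (congrFun h i.rev) j
  rw [Fin.rev_rev] at hi
  funext j
  simpa using hi j.rev

theorem revMT_toCode_rev (μ : Fin ℓ → F) (q : Fin ℓ → F[X]) :
    revMT (fun i j => toCode μ m (fun p => q p.rev) i j.rev) =
      toCode (fun i => μ i.rev) (fun i => m i.rev) q := by
  funext i j
  have := j.isLt
  simp only [revMT, toCode, LinearMap.coe_mk, AddHom.coe_mk, Fin.rev_rev, Fin.val_rev]
  congr 2
  omega

theorem rev_toCode_mem_iff (hm : ∀ i, 0 < m i) {μ : Fin ℓ → F}
    {CC : Submodule F (∀ i, Fin (m i) → F)} {H : Matrix (Fin ℓ) (Fin ℓ) F[X]}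
    (hH : (Submodule.span F[X] (Set.range fun k => H k) : Set (Fin ℓ → F[X])) =
      {u | toCode μ m u ∈ dualCodeMT CC})
    (r : Fin ℓ → F[X]) :
    (fun i j => toCode μ m r i j.rev) ∈ CC ↔
      ∀ k, (∏ i, (X ^ m i - C (μ i))) ∣
        (H *ᵥ (diagonal (cofactor fun i => X ^ m i - C (μ i)) *ᵥ r)) k := by
  set δ : Fin ℓ → F[X] := fun i => X ^ m i - C (μ i)
  have hδ (i : Fin ℓ) : (δ i).Monic := monic_X_pow_sub_C _ (hm i).ne'
  have hδdeg (i : Fin ℓ) : (δ i).natDegree = m i := natDegree_X_pow_sub_C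
  rw [Matrix.dvd_mulVec_iff_forall_mem_span (monic_prod_of_monic _ _ fun i _ => hδ i)]
  conv_lhs => rw [← dualCodeMT_dualCodeMT CC]
  change (∀ v ∈ dualCodeMT CC, ∑ i, ∑ j, v i j * toCode μ m r i j.rev = 0) ↔ _
  rw [(toCode_surjective hm μ).forall]
  refine forall_congr' fun u => ?_
  have htrace := sum_coeff_modByMonic_eq_coeff_dotProduct_cofactor hδ
    (fun i => (hδdeg i).symm ▸ hm i) (fun i => u i * r i)
  simp only [hδdeg] at htrace
  have hdot :
      (fun i => u i * r i) ⬝ᵥ cofactor δ = u ⬝ᵥ (diagonal (cofactor δ) *ᵥ r) := by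
    simp only [dotProduct, mulVec_diagonal, mul_assoc, mul_comm (r _)]
  have hmem :
      u ∈ Submodule.span F[X] (Set.range fun k => H k) ↔ toCode μ m u ∈ dualCodeMT CC := by
    rw [← SetLike.mem_coe, hH, Set.mem_ofPred_eq]
  refine imp_congr hmem.symm ?_
  rw [sum_toCode_mul_toCode_rev hm, htrace, hdot]

end Code

theorem stmt7_general {F : Type*} [Field F] {ℓ : ℕ} {m : Fin ℓ → ℕ}
    (hm : ∀ i, 0 < m i) {lam : Fin ℓ → F} (hlam : ∀ i, lam i ≠ 0)
    (CC : Submodule F (∀ i, Fin (m i) → F)) (hC : IsMT lam CC)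
    (H B : Matrix (Fin ℓ) (Fin ℓ) (Polynomial F))
    (hH : IsGPM (fun i => (lam i)⁻¹) m (dualCodeMT CC) H)
    (hB : B * H = Matrix.diagonal (fun i => X ^ (m i) - Polynomial.C ((lam i)⁻¹))) :
    IsMT (fun i => (lam i.rev)⁻¹) (CC.map revMT) ∧
    IsGPM (fun i => (lam i.rev)⁻¹) (fun i => m i.rev) (CC.map revMT)
      (B.transpose * (1 : Matrix (Fin ℓ) (Fin ℓ) (Polynomial F)).submatrix id Fin.rev) := by
  refine ⟨IsMT.map_revMT hlam hC, ?_⟩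
  have hP : ∏ i, (X ^ m i - C (lam i)⁻¹ : F[X]) ≠ 0 :=
    (monic_prod_of_monic _ _ fun i _ => monic_X_pow_sub_C _ (hm i).ne').ne_zero
  have hdetB : B.det ≠ 0 := fun h0 => hP (by rw [← det_diagonal, ← hB, det_mul, h0, zero_mul])
  let σ := LinearEquiv.funCongrLeft F[X] F[X] (Fin.revPerm (n := ℓ))
  have hrows : (fun i => (Bᵀ * (1 : Matrix (Fin ℓ) (Fin ℓ) F[X]).submatrix id Fin.rev) i) =
      σ ∘ B.col := by
    funext i j
    simp [σ, Matrix.mul_apply, Matrix.one_apply]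
  rw [IsGPM, hrows]
  refine ⟨(linearIndependent_cols_of_det_ne_zero hdetB).map' σ.toLinearMap σ.ker, ?_⟩
  ext q
  rw [Set.range_comp, SetLike.mem_coe, Set.mem_ofPred_eq, ← LinearEquiv.coe_coe,
    Submodule.span_image, Submodule.mem_map_equiv, Matrix.mem_span_range_col_iff hP hB,
    ← rev_toCode_mem_iff hm hH.2, ← revMT_toCode_rev (fun i => (lam i)⁻¹), Submodule.mem_map]
  simp only [revMT_injective.eq_iff, exists_eq_right]
  rfl

/-- Let `C` be a Λ-MT code with block lengths `(m₁,…,m_ℓ)` and set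
`Γ = (λ_ℓ⁻¹,…,λ₁⁻¹)`.  Then the reversed code `R` of `C` (reverse the coordinates of every
codeword) is a Γ-MT code with block lengths `(m_ℓ,…,m₁)`, and `Bᵀ * J_ℓ` is a GPM of `R`,
where `H` is a GPM of the Euclidean dual `C^⊥`, `B` satisfies
`B * H = diag(x^{mᵢ} - λᵢ⁻¹)`, and `J_ℓ` is the backward identity matrix. -/
theorem stmt7 {F : Type*} [Field F] [Fintype F] {ℓ : ℕ} {m : Fin ℓ → ℕ}
    (hm : ∀ i, 0 < m i) {lam : Fin ℓ → F} (hlam : ∀ i, lam i ≠ 0)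
    (CC : Submodule F (∀ i, Fin (m i) → F)) (hC : IsMT lam CC)
    (H B : Matrix (Fin ℓ) (Fin ℓ) (Polynomial F))
    (hH : IsGPM (fun i => (lam i)⁻¹) m (dualCodeMT CC) H)
    (hB : B * H = Matrix.diagonal (fun i => X ^ (m i) - Polynomial.C ((lam i)⁻¹))) :
    IsMT (fun i => (lam i.rev)⁻¹) (CC.map revMT) ∧
    IsGPM (fun i => (lam i.rev)⁻¹) (fun i => m i.rev) (CC.map revMT)
      (B.transpose * (1 : Matrix (Fin ℓ) (Fin ℓ) (Polynomial F)).submatrix id Fin.rev) :=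
  stmt7_general hm hlam CC hC H B hH hB
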